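/- Let G be a set, F a set of bijections of G, φ = (φ₁,…,φₙ) a sequence in F, and 𝓔 = {E₁,…,Eₘ} a partition of G. If (f_C)_{C ∈ Con(φ,𝓔)} is a normalized solution of the configuration equations (f_C ≥ 0, Σ f_C = 1, and Σ{f_C : cᵢ(C)=j} = Σ{f_C : c₀(C)=j} for all i,j), then there exists a finitely additive probability 'pre-measure' μ on the algebra generated by the sets {x₀(C)} with μ(x₀(C)) = f_C satisfying μ(φᵢ⁻¹(Eⱼ)) = μ(Eⱼ) for all i, j. -/
import Mathlib


/-- The atom `x₀(C)` of the configuration `C = (c₀, (cᵢ))` for the bijections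
`φ` and the partition `E`: `x₀(C) = E_{c₀} ∩ ⋂ᵢ φᵢ⁻¹(E_{cᵢ})`. -/
def atom {G : Type*} {n m : ℕ} (φ : Fin n → Equiv.Perm G) (E : Fin m → Set G)
    (C : Fin m × (Fin n → Fin m)) : Set G :=
  E C.1 ∩ ⋂ i, (φ i) ⁻¹' (E (C.2 i))

theorem stmt18 {G : Type*} (F : Set (Equiv.Perm G)) (n m : ℕ)
    (φ : Fin n → Equiv.Perm G) (hφ : ∀ i, φ i ∈ F)
    (E : Fin m → Set G)
    (hdisj : Pairwise (Function.onFun Disjoint E))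
    (hcov : (⋃ j, E j) = Set.univ)
    (f : Fin m × (Fin n → Fin m) → ℝ)
    (hf0 : ∀ C, 0 ≤ f C)
    (hfe : ∀ C, atom φ E C = ∅ → f C = 0)
    (hsum : (∑ C : Fin m × (Fin n → Fin m), f C) = 1)
    (heq : ∀ (i : Fin n) (j : Fin m),
      (∑ C ∈ Finset.univ.filter (fun C : Fin m × (Fin n → Fin m) => C.2 i = j),
        f C) =
      ∑ C ∈ Finset.univ.filter (fun C : Fin m × (Fin n → Fin m) => C.1 = j),
        f C) :
    ∃ μ : Set G → ℝ,
      -- μ is the finitely additive pre-measure on the algebra of unions of atoms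
      (∀ s : Finset (Fin m × (Fin n → Fin m)),
        μ (⋃ C ∈ s, atom φ E C) = ∑ C ∈ s, f C) ∧
      (∀ C, μ (atom φ E C) = f C) ∧
      μ Set.univ = 1 ∧
      (∀ (i : Fin n) (j : Fin m), μ ((φ i) ⁻¹' (E j)) = μ (E j)) := by
  classical
  have hE : ∀ {j j' : Fin m} {x : G}, x ∈ E j → x ∈ E j' → j = j' := by
    intro j j' x hj hj'
    by_contra h
    exact Set.disjoint_left.mp (hdisj h) hj hj'
  have hmem : ∀ C (x : G),
      x ∈ atom φ E C ↔ x ∈ E C.1 ∧ ∀ i, φ i x ∈ E (C.2 i) := by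
    intro C x; simp [atom]
  have huniq : ∀ C C' (x : G), x ∈ atom φ E C → x ∈ atom φ E C' → C = C' := by
    intro C C' x h h'
    rw [hmem] at h h'
    have h1 : C.1 = C'.1 := hE h.1 h'.1
    have h2 : C.2 = C'.2 := funext fun i => hE (h.2 i) (h'.2 i)
    exact Prod.ext h1 h2
  set μ : Set G → ℝ := fun s => ∑ C ∈ Finset.univ.filter
      (fun C => (atom φ E C).Nonempty ∧ atom φ E C ⊆ s), f C with hμ
  have hdrop : ∀ (q : Fin m × (Fin n → Fin m) → Prop) [DecidablePred q],
      (∑ C ∈ Finset.univ.filter (fun C => (atom φ E C).Nonempty ∧ q C), f C)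
        = ∑ C ∈ Finset.univ.filter q, f C := by
    intro q _
    refine Finset.sum_subset (fun C hC => ?_) (fun C hC hC' => ?_)
    · simp only [Finset.mem_filter] at hC ⊢
      exact ⟨hC.1, hC.2.2⟩
    · simp only [Finset.mem_filter, Finset.mem_univ, true_and] at hC hC'
      apply hfe
      rw [← Set.not_nonempty_iff_eq_empty]
      intro hne
      exact hC' ⟨hne, hC⟩
  have key : ∀ s : Finset (Fin m × (Fin n → Fin m)),
      μ (⋃ C ∈ s, atom φ E C) = ∑ C ∈ s, f C := by
    intro s
    simp only [hμ]
    have hfil : Finset.univ.filter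
        (fun C => (atom φ E C).Nonempty ∧ atom φ E C ⊆ ⋃ C ∈ s, atom φ E C)
        = Finset.univ.filter (fun C => (atom φ E C).Nonempty ∧ C ∈ s) := by
      apply Finset.filter_congr
      intro C _
      constructor
      · rintro ⟨⟨x, hx⟩, hsub⟩
        refine ⟨⟨x, hx⟩, ?_⟩
        have := hsub hx
        simp only [Set.mem_iUnion] at this
        obtain ⟨C', hC', hx'⟩ := this
        rwa [huniq C C' x hx hx']
      · rintro ⟨hne, hCs⟩
        exact ⟨hne, Set.subset_biUnion_of_mem hCs⟩
    rw [hfil, hdrop (fun C => C ∈ s)]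
    congr 1
    simp
  refine ⟨μ, key, ?_, ?_, ?_⟩
  · intro C
    have := key {C}
    simpa using this
  · simp only [hμ, Set.subset_univ, and_true]
    rw [Finset.sum_filter_of_ne
      (fun C _ h => Set.nonempty_iff_ne_empty.mpr (fun he => h (hfe C he)))]
    exact hsum
  · intro i j
    have h1 : μ ((φ i) ⁻¹' (E j))
        = ∑ C ∈ Finset.univ.filter (fun C : Fin m × (Fin n → Fin m) => C.2 i = j), f C := by
      simp only [hμ]
      have hfil : Finset.univ.filter
          (fun C => (atom φ E C).Nonempty ∧ atom φ E C ⊆ (φ i) ⁻¹' (E j))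
          = Finset.univ.filter (fun C => (atom φ E C).Nonempty ∧ C.2 i = j) := by
        apply Finset.filter_congr
        intro C _
        constructor
        · rintro ⟨⟨x, hx⟩, hsub⟩
          exact ⟨⟨x, hx⟩, hE (((hmem C x).mp hx).2 i) (hsub hx)⟩
        · rintro ⟨hne, hj⟩
          refine ⟨hne, fun x hx => ?_⟩
          have := ((hmem C x).mp hx).2 i
          rwa [hj] at this
      rw [hfil, hdrop (fun C => C.2 i = j)]
    have h2 : μ (E j)
        = ∑ C ∈ Finset.univ.filter (fun C : Fin m × (Fin n → Fin m) => C.1 = j), f C := by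
      simp only [hμ]
      have hfil : Finset.univ.filter
          (fun C => (atom φ E C).Nonempty ∧ atom φ E C ⊆ E j)
          = Finset.univ.filter (fun C => (atom φ E C).Nonempty ∧ C.1 = j) := by
        apply Finset.filter_congr
        intro C _
        constructor
        · rintro ⟨⟨x, hx⟩, hsub⟩
          exact ⟨⟨x, hx⟩, hE ((hmem C x).mp hx).1 (hsub hx)⟩
        · rintro ⟨hne, hj⟩
          refine ⟨hne, fun x hx => ?_⟩
          have := ((hmem C x).mp hx).1
          rwa [hj] at this
      rw [hfil, hdrop (fun C => C.1 = j)]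
    rw [h1, h2, heq]
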